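/- Let α be the all-ones composition with r ≥ 1 parts. Define polynomials D_k ∈ ℤ[t] for k ≥ r by D_r = 1 and D_k = 2·D_{k−1} − ∏_{i=r}^{k−1} (1 − it) for k > r. Then for every k ≥ r, L_k^α[𝔑](t) · ∏_{i=r}^{k} (1 − it) = t^k · D_k in ℤ[[t]]. -/

import Mathlib

/-!
Write `a(n, k)` for the number of saturated chains from `α` to a composition of weight `n` and
width `k`. A chain ending above weight `|α|` is a shorter chain extended by one covering step.
A composition `P` of width `k` has `k` covers of width `k` (raise a part) and two of width `k + 1`
(prepend or append a `1`), and the latter coincide exactly when `P` is all-ones, i.e. when its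
weight equals its width. Hence `a(n+1, k+1) = (k+1) a(n, k+1) + 2 a(n, k) - [n = k] a(n, k)` for
`n ≥ |α|`, and for `α` all-ones of width `r` also `a(n, n) = 1` for `n ≥ r`. On generating
functions this reads `L_r (1 - r t) = t^r` and `L_{k+1} (1 - (k+1) t) = 2 t L_k - t^{k+1}` for
`k ≥ r`, and the product formula follows by induction on `k` along the recurrence for `D_k`.
-/

/-- A composition: a finite list of positive integers. -/
def IsComposition (P : List ℕ) : Prop := ∀ x ∈ P, 0 < x

/-- Covering relation of the poset 𝔑: prepend a part 1, append a part 1,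
or increase one part by 1. -/
def coverN (P Q : List ℕ) : Prop :=
  Q = 1 :: P ∨ Q = P ++ [1] ∨ ∃ j, j < P.length ∧ Q = P.set j (P.getD j 0 + 1)

/-- `ank cover α n k` is the number of saturated chains (with respect to `cover`)
starting at `α` and ending at a composition of `n` with `k` parts. -/
noncomputable def ank (cover : List ℕ → List ℕ → Prop) (α : List ℕ) (n k : ℕ) : ℕ :=
  Nat.card {c : List (List ℕ) //
    c.Chain' cover ∧ c.head? = some α ∧
      ∃ Q, c.getLast? = some Q ∧ Q.sum = n ∧ Q.length = k}

/-- The generating function `L_k^α(t) = Σ_n a_{n,k}^α t^n`. -/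
noncomputable def Lser (cover : List ℕ → List ℕ → Prop) (α : List ℕ) (k : ℕ) :
    PowerSeries ℤ :=
  PowerSeries.mk fun n => (ank cover α n k : ℤ)

theorem List.cons_eq_append_singleton_iff {α : Type*} {a : α} {l : List α} :
    a :: l = l ++ [a] ↔ ∀ x ∈ l, x = a := by
  refine ⟨fun h => ?_, fun h => ?_⟩
  · induction l with
    | nil => simp
    | cons b t ih =>
      obtain ⟨rfl, h⟩ := List.cons_eq_cons.1 h
      simpa using ih h
  · rw [List.eq_replicate_length.2 h, ← List.replicate_succ, ← List.replicate_succ']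

theorem List.sum_set_getD_add_one {P : List ℕ} {i : ℕ} (hi : i < P.length) :
    (P.set i (P.getD i 0 + 1)).sum = P.sum + 1 := by
  rw [List.sum_set, if_pos hi, List.getD_eq_getElem _ _ hi, ← List.sum_take_add_sum_drop P i,
    List.drop_eq_getElem_cons hi, List.sum_cons]
  ring

theorem List.eq_of_set_getD_add_one_eq {P : List ℕ} {i j : ℕ} (hi : i < P.length)
    (h : P.set i (P.getD i 0 + 1) = P.set j (P.getD j 0 + 1)) : i = j := by
  by_contra hij
  simpa [hi, Ne.symm hij] using congrArg (·[i]?) h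

theorem List.IsChain.exists_eq_concat {β : Type*} {R : β → β → Prop} {c : List β} {b : β}
    (hc : c.IsChain R) (hb : c.getLast? = some b) :
    c = [b] ∨
      ∃ l a, c = l ++ [b] ∧ l.IsChain R ∧ l.head? = c.head? ∧ l.getLast? = some a ∧ R a b := by
  obtain rfl | ⟨l, b', rfl⟩ := c.eq_nil_or_concat
  · simp at hb
  rw [List.concat_eq_append, List.getLast?_concat, Option.some.injEq] at hb
  subst hb
  rw [List.concat_eq_append] at hc ⊢
  obtain rfl | hl := eq_or_ne l []
  · simp
  obtain ⟨a, ha⟩ := Option.isSome_iff_exists.1 (List.getLast?_isSome.2 hl)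
  rw [List.isChain_append] at hc
  exact .inr ⟨l, a, rfl, hc.1, (List.head?_append_of_ne_nil _ hl).symm, ha,
    hc.2.2 a ha _ rfl⟩

theorem List.IsChain.append_singleton {β : Type*} {R : β → β → Prop} {c : List β} {a b : β}
    (hc : c.IsChain R) (ha : c.getLast? = some a) (hab : R a b) : (c ++ [b]).IsChain R :=
  hc.append (List.isChain_singleton b) fun _ hx _ hy => by
    cases ha ▸ hx; cases hy; exact hab

namespace IsComposition

theorem length_le_sum {P : List ℕ} (hP : IsComposition P) : P.length ≤ P.sum :=
  P.length_le_sum_of_one_le hP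

theorem sum_eq_length_iff {P : List ℕ} (hP : IsComposition P) :
    P.sum = P.length ↔ ∀ x ∈ P, x = 1 := by
  refine ⟨fun h => ?_, fun h => by rw [List.eq_replicate_length.2 h]; simp⟩
  induction P with
  | nil => simp
  | cons a t ih =>
    have ht : IsComposition t := fun x hx => hP x (List.mem_cons_of_mem a hx)
    have hlen := ht.length_le_sum
    have ha := hP a List.mem_cons_self
    simp only [List.sum_cons, List.length_cons] at h
    simpa [show a = 1 by omega] using ih ht (by omega)

end IsComposition

section coverN

variable {P Q : List ℕ}

theorem coverN.sum_eq (h : coverN P Q) : Q.sum = P.sum + 1 := by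
  rcases h with rfl | rfl | ⟨j, hj, rfl⟩
  · simp [Nat.add_comm]
  · simp
  · exact List.sum_set_getD_add_one hj

theorem coverN.length_le (h : coverN P Q) : P.length ≤ Q.length := by
  rcases h with rfl | rfl | ⟨j, hj, rfl⟩ <;> simp

theorem IsComposition.of_coverN (hP : IsComposition P) (h : coverN P Q) : IsComposition Q := by
  rcases h with rfl | rfl | ⟨j, hj, rfl⟩
  · simpa [IsComposition] using hP
  · simpa [IsComposition, or_imp, forall_and] using hP
  · intro x hx
    rcases List.mem_or_eq_of_mem_set hx with hx | rfl
    exacts [hP x hx, Nat.succ_pos _]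

theorem sum_le_of_reflTransGen_coverN (h : Relation.ReflTransGen coverN P Q) : P.sum ≤ Q.sum := by
  simpa [Relation.reflTransGen_eq_self] using
    h.lift List.sum fun _ _ h => (Nat.le_succ _).trans_eq h.sum_eq.symm

theorem length_le_of_reflTransGen_coverN (h : Relation.ReflTransGen coverN P Q) :
    P.length ≤ Q.length := by
  simpa [Relation.reflTransGen_eq_self] using h.lift List.length fun _ _ h => h.length_le

theorem IsComposition.of_reflTransGen_coverN (hP : IsComposition P)
    (h : Relation.ReflTransGen coverN P Q) : IsComposition Q := by
  induction h with
  | refl => exact hP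
  | tail _ hcov ih => exact ih.of_coverN hcov

end coverN

def SatChain (α : List ℕ) (n k : ℕ) : Type :=
  {c : List (List ℕ) // c.IsChain coverN ∧ c.head? = some α ∧
    ∃ Q, c.getLast? = some Q ∧ Q.sum = n ∧ Q.length = k}

theorem ank_coverN_eq_card (α : List ℕ) (n k : ℕ) :
    ank coverN α n k = Nat.card (SatChain α n k) := rfl

namespace SatChain

variable {α : List ℕ} {n k : ℕ}

theorem isChain (c : SatChain α n k) : c.1.IsChain coverN := c.2.1

theorem head?_eq (c : SatChain α n k) : c.1.head? = some α := c.2.2.1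

theorem ne_nil (c : SatChain α n k) : c.1 ≠ [] := by
  intro h; simpa [h] using c.head?_eq

def top (c : SatChain α n k) : List ℕ := c.1.getLast?.getD []

theorem getLast?_eq (c : SatChain α n k) : c.1.getLast? = some c.top := by
  obtain ⟨_, -, -, Q, hQ, -⟩ := c
  simp [top, hQ]

theorem sum_top (c : SatChain α n k) : c.top.sum = n := by
  obtain ⟨_, -, -, Q, hQ, hn, -⟩ := c
  simpa [top, hQ] using hn

theorem length_top (c : SatChain α n k) : c.top.length = k := by
  obtain ⟨_, -, -, Q, hQ, -, hk⟩ := c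
  simpa [top, hQ] using hk

theorem reflTransGen_top (c : SatChain α n k) : Relation.ReflTransGen coverN α c.top := by
  convert List.relationReflTransGen_of_exists_isChain c.1 c.isChain c.ne_nil using 1
  · simpa [List.head?_eq_some_head c.ne_nil] using c.head?_eq.symm
  · simpa [List.getLast?_eq_some_getLast c.ne_nil] using c.getLast?_eq.symm

theorem sum_le (c : SatChain α n k) : α.sum ≤ n :=
  c.sum_top ▸ sum_le_of_reflTransGen_coverN c.reflTransGen_top

theorem length_le (c : SatChain α n k) : α.length ≤ k :=
  c.length_top ▸ length_le_of_reflTransGen_coverN c.reflTransGen_top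

theorem isComposition_top (hα : IsComposition α) (c : SatChain α n k) : IsComposition c.top :=
  hα.of_reflTransGen_coverN c.reflTransGen_top

theorem le_sum (hα : IsComposition α) (c : SatChain α n k) : k ≤ n := by
  simpa [c.sum_top, c.length_top] using (c.isComposition_top hα).length_le_sum

def snoc (c : SatChain α n k) {k' : ℕ} (Q : List ℕ) (hQ : coverN c.top Q) (hk : Q.length = k') :
    SatChain α (n + 1) k' :=
  ⟨c.1 ++ [Q], c.isChain.append_singleton c.getLast?_eq hQ,
    by rw [List.head?_append_of_ne_nil _ c.ne_nil, c.head?_eq],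
    Q, List.getLast?_concat, by rw [hQ.sum_eq, sum_top], hk⟩

theorem eq_singleton_or_exists_append (c : SatChain α n k) :
    c.1 = [α] ∨ ∃ m k₀, ∃ c' : SatChain α m k₀, ∃ Q,
      coverN c'.top Q ∧ c.top = Q ∧ c.1 = c'.1 ++ [Q] := by
  obtain hc | ⟨l, P, hl, hchain, hhead, hP, hPQ⟩ := c.isChain.exists_eq_concat c.getLast?_eq
  · left
    have := c.head?_eq
    rw [hc, List.head?_singleton, Option.some.injEq] at this
    rw [hc, this]
  · right
    let c' : SatChain α P.sum P.length := ⟨l, hchain, hhead.trans c.head?_eq, P, hP, rfl, rfl⟩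
    have hc' : c'.top = P := by simp [top, c', hP]
    exact ⟨_, _, c', c.top, by rwa [hc'], rfl, hl⟩

theorem eq_singleton_of_le (c : SatChain α n k) (hn : n ≤ α.sum) : c.1 = [α] := by
  obtain hc | ⟨m, k₀, c', Q, hQ, rfl, -⟩ := c.eq_singleton_or_exists_append
  · exact hc
  · have hsum := hQ.sum_eq
    rw [c.sum_top, c'.sum_top] at hsum
    have := c'.sum_le
    omega

theorem subsingleton_of_le (hn : n ≤ α.sum) : Subsingleton (SatChain α n k) :=
  ⟨fun c c' => Subtype.ext ((c.eq_singleton_of_le hn).trans (c'.eq_singleton_of_le hn).symm)⟩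

theorem width_eq_of_val_eq {n' k' : ℕ} {c : SatChain α n k} {c' : SatChain α n' k'}
    (h : c.1 = c'.1) : k = k' := by
  rw [← c.length_top, ← c'.length_top]
  simp [top, h]

theorem cons_one_top_eq_iff (hα : IsComposition α) (c : SatChain α n k) :
    1 :: c.top = c.top ++ [1] ↔ n = k := by
  rw [List.cons_eq_append_singleton_iff, ← (c.isComposition_top hα).sum_eq_length_iff,
    c.sum_top, c.length_top]

-- Appending a `1` is listed separately only for `n ≠ k`: for `n = k` the top is all-ones, and
-- appending a `1` gives the same chain as prepending one.
variable (α n k) in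
def extend :
    (SatChain α n (k + 1) × Fin (k + 1)) ⊕ SatChain α n k ⊕ {_c : SatChain α n k // n ≠ k} →
      SatChain α (n + 1) (k + 1)
  | .inl (c, j) => c.snoc (c.top.set j (c.top.getD j 0 + 1))
      (.inr (.inr ⟨j, j.2.trans_eq c.length_top.symm, rfl⟩)) (by simp [c.length_top])
  | .inr (.inl c) => c.snoc (1 :: c.top) (.inl rfl) (by simp [c.length_top])
  | .inr (.inr c) => c.1.snoc (c.1.top ++ [1]) (.inr (.inl rfl)) (by simp [c.1.length_top])

theorem extend_injective (hα : IsComposition α) : Function.Injective (extend α n k) := by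
  rintro (⟨c, i⟩ | c | ⟨c, hnk⟩) (⟨c', i'⟩ | c' | ⟨c', hnk'⟩) h <;>
    obtain ⟨hc, hQ⟩ := List.append_singleton_inj.1 (congrArg Subtype.val h) <;>
    first
    | exact absurd (width_eq_of_val_eq hc) (by omega)
    | obtain rfl := Subtype.ext hc
  case inl.inl =>
    rw [Fin.ext (List.eq_of_set_getD_add_one_eq (i.2.trans_eq c.length_top.symm) hQ)]
  case inr.inl.inr.inr => exact absurd ((c.cons_one_top_eq_iff hα).1 hQ) hnk'
  case inr.inr.inr.inl => exact absurd ((c.cons_one_top_eq_iff hα).1 hQ.symm) hnk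
  all_goals rfl

theorem extend_surjective (hα : IsComposition α) (hn : α.sum ≤ n) :
    Function.Surjective (extend α n k) := by
  intro c
  obtain hc | ⟨m, k₀, c', Q, hQ, hQc, hc⟩ := c.eq_singleton_or_exists_append
  · have := c.sum_top
    rw [show c.top = α by simpa [hc] using c.getLast?_eq.symm] at this
    omega
  obtain rfl : m = n := by
    have hsum := hQ.sum_eq
    rw [← hQc, c.sum_top, c'.sum_top] at hsum
    omega
  have hQk : Q.length = k + 1 := hQc ▸ c.length_top
  rcases hQ with rfl | rfl | ⟨j, hj, rfl⟩
  · obtain rfl : k₀ = k := by simpa [c'.length_top] using hQk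
    exact ⟨.inr (.inl c'), Subtype.ext hc.symm⟩
  · obtain rfl : k₀ = k := by simpa [c'.length_top] using hQk
    by_cases hnk : m = k₀
    · refine ⟨.inr (.inl c'), Subtype.ext ?_⟩
      rw [hc, ← (c'.cons_one_top_eq_iff hα).2 hnk]
      rfl
    · exact ⟨.inr (.inr ⟨c', hnk⟩), Subtype.ext hc.symm⟩
  · obtain rfl : k₀ = k + 1 := by simpa [c'.length_top] using hQk
    exact ⟨.inl (c', ⟨j, hj.trans_eq c'.length_top⟩), Subtype.ext hc.symm⟩

theorem isEmpty_succ_zero : IsEmpty (SatChain α (n + 1) 0) :=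
  ⟨fun c => by simpa [List.length_eq_zero_iff.1 c.length_top] using c.sum_top⟩

theorem finite (hα : IsComposition α) (n k : ℕ) : Finite (SatChain α n k) := by
  induction n generalizing k with
  | zero =>
    have := subsingleton_of_le (α := α) (k := k) (Nat.zero_le _)
    infer_instance
  | succ m ih =>
    rcases le_or_gt (m + 1) α.sum with h | h
    · have := subsingleton_of_le (k := k) h
      infer_instance
    cases k with
    | zero =>
      have := isEmpty_succ_zero (α := α) (n := m)
      infer_instance
    | succ k =>
      have := ih (k + 1)
      have := ih k
      exact Finite.of_surjective _ (extend_surjective hα (Nat.le_of_lt_succ h))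

theorem card_succ_succ (hα : IsComposition α) (hn : α.sum ≤ n) :
    Nat.card (SatChain α (n + 1) (k + 1)) =
      (k + 1) * Nat.card (SatChain α n (k + 1)) + Nat.card (SatChain α n k) +
        if n = k then 0 else Nat.card (SatChain α n k) := by
  have := finite hα n (k + 1)
  have := finite hα n k
  rw [← Nat.card_congr (Equiv.ofBijective _ ⟨extend_injective hα, extend_surjective hα hn⟩),
    Nat.card_sum, Nat.card_sum, Nat.card_prod, Nat.card_fin, mul_comm, ← add_assoc]
  split_ifs with h
  · simp [h]
  · rw [Nat.card_congr (Equiv.subtypeUnivEquiv fun _ => h)]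

end SatChain

section ank

variable {α : List ℕ} {n k : ℕ}

theorem ank_coverN_eq_zero_of_lt_length (h : k < α.length) : ank coverN α n k = 0 := by
  rw [ank_coverN_eq_card]
  have : IsEmpty (SatChain α n k) := ⟨fun c => absurd c.length_le (by omega)⟩
  exact Nat.card_of_isEmpty

theorem ank_coverN_eq_zero_of_lt (hα : IsComposition α) (h : n < k) : ank coverN α n k = 0 := by
  rw [ank_coverN_eq_card]
  have : IsEmpty (SatChain α n k) := ⟨fun c => absurd (c.le_sum hα) (by omega)⟩
  exact Nat.card_of_isEmpty

theorem ank_coverN_succ_zero : ank coverN α (n + 1) 0 = 0 :=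
  @Nat.card_of_isEmpty _ SatChain.isEmpty_succ_zero

theorem ank_coverN_sum_length : ank coverN α α.sum α.length = 1 := by
  rw [ank_coverN_eq_card]
  have := SatChain.subsingleton_of_le (α := α) (k := α.length) le_rfl
  have : Nonempty (SatChain α α.sum α.length) :=
    ⟨[α], List.isChain_singleton α, rfl, α, rfl, rfl, rfl⟩
  exact Nat.card_eq_one_iff_unique.2 ⟨inferInstance, inferInstance⟩

theorem ank_coverN_succ_succ (hα : IsComposition α) (hn : α.sum ≤ n) :
    ank coverN α (n + 1) (k + 1) =
      (k + 1) * ank coverN α n (k + 1) + ank coverN α n k +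
        if n = k then 0 else ank coverN α n k :=
  SatChain.card_succ_succ hα hn

end ank

section replicate

variable {r n : ℕ}

theorem isComposition_replicate_one (r : ℕ) : IsComposition (List.replicate r 1) := by
  simp [IsComposition, List.mem_replicate]

theorem ank_coverN_replicate_diag (hn : r ≤ n) : ank coverN (List.replicate r 1) n n = 1 := by
  induction n, hn using Nat.le_induction with
  | base => simpa using ank_coverN_sum_length (α := List.replicate r 1)
  | succ n hn ih =>
    rw [ank_coverN_succ_succ (isComposition_replicate_one r) (by simpa using hn), if_pos rfl, ih,
      ank_coverN_eq_zero_of_lt (isComposition_replicate_one r) (Nat.lt_succ_self n), mul_zero]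

theorem ank_coverN_replicate_succ_self (p : ℕ) :
    (ank coverN (List.replicate r 1) (p + 1) r : ℤ) =
      r * ank coverN (List.replicate r 1) p r + if p + 1 = r then 1 else 0 := by
  have hα := isComposition_replicate_one r
  rcases lt_trichotomy (p + 1) r with h | rfl | h
  · simp [ank_coverN_eq_zero_of_lt hα h, ank_coverN_eq_zero_of_lt hα (Nat.lt_of_succ_lt h), h.ne]
  · simp [ank_coverN_replicate_diag le_rfl, ank_coverN_eq_zero_of_lt hα (Nat.lt_succ_self p)]
  · obtain _ | k := r
    · simp [ank_coverN_succ_zero]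
    · rw [ank_coverN_succ_succ hα (by simpa using Nat.le_of_lt_succ h),
        ank_coverN_eq_zero_of_lt_length (n := p) (k := k) (by simp), if_neg (by omega),
        if_neg (by omega)]
      push_cast
      ring

theorem ank_coverN_replicate_succ_succ {k : ℕ} (hk : r ≤ k) (p : ℕ) :
    (ank coverN (List.replicate r 1) (p + 1) (k + 1) : ℤ) =
      (k + 1) * ank coverN (List.replicate r 1) p (k + 1) +
        (2 * ank coverN (List.replicate r 1) p k - if p = k then 1 else 0) := by
  have hα := isComposition_replicate_one r
  rcases lt_or_ge p r with hp | hp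
  · simp [ank_coverN_eq_zero_of_lt hα (show p + 1 < k + 1 by omega),
      ank_coverN_eq_zero_of_lt hα (show p < k + 1 by omega),
      ank_coverN_eq_zero_of_lt hα (show p < k by omega), show p ≠ k by omega]
  rw [ank_coverN_succ_succ hα (by simpa using hp)]
  split_ifs with hpk
  · subst hpk
    simp [ank_coverN_replicate_diag hp, ank_coverN_eq_zero_of_lt hα (Nat.lt_succ_self p)]
  · push_cast
    ring

end replicate

theorem PowerSeries.mk_mul_one_sub_natCast_mul_X_eq {R : Type*} [CommRing R] {a : ℕ → R}
    {c : ℕ} {g : PowerSeries R} (h0 : a 0 = coeff 0 g)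
    (hsucc : ∀ p, a (p + 1) = c * a p + coeff (p + 1) g) :
    mk a * (1 - (c : PowerSeries R) * X) = g := by
  rw [show mk a * (1 - (c : PowerSeries R) * X) = mk a - X * (c • mk a) by
    rw [nsmul_eq_mul]; ring]
  ext (_ | p)
  · simp [h0]
  · rw [map_sub, coeff_succ_X_mul, map_nsmul, coeff_mk, coeff_mk, hsucc, nsmul_eq_mul,
      add_sub_cancel_left]

open PowerSeries

theorem Lser_coverN_replicate_self (r : ℕ) :
    Lser coverN (List.replicate r 1) r * (1 - (r : PowerSeries ℤ) * X) = X ^ r := by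
  refine mk_mul_one_sub_natCast_mul_X_eq ?_ fun p => ?_
  · obtain _ | r := r
    · simpa using ank_coverN_replicate_diag (r := 0) le_rfl
    · simp [ank_coverN_eq_zero_of_lt (isComposition_replicate_one _) r.succ_pos, coeff_X_pow]
  · rw [ank_coverN_replicate_succ_self, coeff_X_pow]

theorem Lser_coverN_replicate_succ {r k : ℕ} (hk : r ≤ k) :
    Lser coverN (List.replicate r 1) (k + 1) * (1 - ((k + 1 : ℕ) : PowerSeries ℤ) * X) =
      2 * X * Lser coverN (List.replicate r 1) k - X ^ (k + 1) := by
  rw [show 2 * X * Lser coverN (List.replicate r 1) k - X ^ (k + 1) =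
    X * (2 • Lser coverN (List.replicate r 1) k - X ^ k) by ring]
  refine mk_mul_one_sub_natCast_mul_X_eq ?_ fun p => ?_
  · simp [ank_coverN_eq_zero_of_lt (isComposition_replicate_one r) k.succ_pos]
  · rw [ank_coverN_replicate_succ_succ hk, coeff_succ_X_mul, map_sub, map_nsmul, coeff_X_pow]
    simp [Lser]

open PowerSeries in
theorem stmt12_general (r : ℕ) (α : List ℕ) (hα : α = List.replicate r 1)
    (D : ℕ → Polynomial ℤ) (hDr : D r = 1)
    (hDk : ∀ k, r < k →
      D k = 2 * D (k - 1) -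
        ∏ i ∈ Finset.Ico r k, (1 - (i : Polynomial ℤ) * Polynomial.X)) :
    ∀ k, r ≤ k →
      Lser coverN α k * ∏ i ∈ Finset.Icc r k, (1 - (i : PowerSeries ℤ) * X) =
        X ^ k * (D k : PowerSeries ℤ) := by
  subst hα
  intro k hk
  induction k, hk using Nat.le_induction with
  | base =>
    rw [Finset.Icc_self, Finset.prod_singleton, hDr, Polynomial.coe_one, mul_one]
    exact Lser_coverN_replicate_self r
  | succ k hk ih =>
    have hD : (D (k + 1) : PowerSeries ℤ) =
        2 * D k - ∏ i ∈ Finset.Icc r k, (1 - (i : PowerSeries ℤ) * X) := by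
      rw [hDk (k + 1) (by omega), Nat.add_sub_cancel, Finset.Ico_add_one_right_eq_Icc,
        ← Polynomial.coeToPowerSeries.ringHom_apply]
      simp only [map_sub, map_mul, map_prod, map_ofNat, map_one, map_natCast,
        Polynomial.coeToPowerSeries.ringHom_apply, Polynomial.coe_X]
    rw [Finset.prod_Icc_succ_top (by omega), hD]
    linear_combination (∏ i ∈ Finset.Icc r k, (1 - (i : PowerSeries ℤ) * X)) *
      Lser_coverN_replicate_succ hk + 2 * X * ih

open PowerSeries in
theorem stmt12 (r : ℕ) (hr : 1 ≤ r) (α : List ℕ) (hα : α = List.replicate r 1)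
    (D : ℕ → Polynomial ℤ) (hDr : D r = 1)
    (hDk : ∀ k, r < k →
      D k = 2 * D (k - 1) -
        ∏ i ∈ Finset.Ico r k, (1 - (i : Polynomial ℤ) * Polynomial.X)) :
    ∀ k, r ≤ k →
      Lser coverN α k * ∏ i ∈ Finset.Icc r k, (1 - (i : PowerSeries ℤ) * X) =
        X ^ k * (D k : PowerSeries ℤ) :=
  stmt12_general r α hα D hDr hDk
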